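/- arXiv:1206.0213 — 4 statements merged into one kernel-verified Lean document; each statement's English description precedes it below -/
import Mathlib

section
/- Let F be a homeomorphism of a connected surface N, with universal cover whose deck group has trivial center, and suppose F admits a lift F̂ commuting with all deck transformations. Then any two paths α and β from the same point z to F(z), each adapted to F (i.e., conjugating the fundamental group action as α·F(γ)·α⁻ ≃ γ for all loops γ at z), are homotopic rel endpoints in N. -/
/-!
Write `c = α⁻¹ β`, a loop at `F z`. Adaptedness of `α` and `β` says that conjugation by either
path takes `F ∘ γ` to `γ`, so `c` commutes with every loop at `F z`. Fix a point `e` over `F z`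
and the deck transformation `T` with `T e = c · e` (monodromy action). Deck transformations
commute with monodromy and every point of the fibre is `q · e` for a loop `q`, so `T` commutes
with every deck transformation, hence `T = id`. Then `c` fixes `e`, and since the cover is simply
connected this forces `c = 1`, i.e. `α ≃ β`.
-/

theorem IsLocalHomeomorph.locallyPathConnectedSpace {E X : Type*} [TopologicalSpace E]
    [TopologicalSpace X] [LocallyPathConnectedSpace X] {p : E → X} (hp : IsLocalHomeomorph p) :
    LocallyPathConnectedSpace E :=
  letI : ChartedSpace X E :=
    { atlas := Set.range fun e => (hp e).choose
      chartAt := fun e => (hp e).choose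
      mem_chart_source := fun e => (hp e).choose_spec.1
      chart_mem_atlas := fun e => Set.mem_range_self e }
  ChartedSpace.locallyPathConnectedSpace X E

namespace Path.Homotopic.Quotient

variable {X Y : Type*} [TopologicalSpace X] [TopologicalSpace Y] {x y : X}

theorem symm_trans_comm_of_conj_eq {a b : Path.Homotopic.Quotient x y}
    {q : Path.Homotopic.Quotient y y} (h : a.trans (q.trans a.symm) = b.trans (q.trans b.symm)) :
    (a.symm.trans b).trans q = q.trans (a.symm.trans b) := by
  have hb : b.trans q = a.trans (q.trans (a.symm.trans b)) :=
    calc b.trans q = (b.trans (q.trans b.symm)).trans b := by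
          simp only [trans_assoc, symm_trans, trans_refl]
      _ = a.trans (q.trans (a.symm.trans b)) := by rw [← h]; simp only [trans_assoc]
  rw [trans_assoc, hb, ← trans_assoc a.symm, symm_trans, refl_trans]

theorem eq_of_symm_trans_eq_refl {a b : Path.Homotopic.Quotient x y}
    (h : a.symm.trans b = refl y) : a = b := by
  rw [← trans_refl a, ← h, ← trans_assoc, trans_symm, refl_trans]

theorem exists_map_eq (F : X ≃ₜ Y) (q : Path.Homotopic.Quotient (F x) (F y)) :
    ∃ γ : Path.Homotopic.Quotient x y, γ.map (F : C(X, Y)) = q := by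
  induction q using Path.Homotopic.Quotient.ind with | mk q =>
  refine ⟨mk ((q.map F.symm.continuous).cast (F.symm_apply_apply x).symm
    (F.symm_apply_apply y).symm), ?_⟩
  rw [← mk_map]
  congr 1
  ext t
  simp

end Path.Homotopic.Quotient

namespace IsCoveringMap

variable {E X : Type*} [TopologicalSpace E] [TopologicalSpace X] {p : E → X}
  (cov : IsCoveringMap p)
include cov

theorem nonempty_fiber [PathConnectedSpace X] [Nonempty E] (x : X) : Nonempty (p ⁻¹' {x}) :=
  let e : E := Classical.arbitrary E
  ⟨cov.monodromy (.mk (PathConnectedSpace.somePath (p e) x)) ⟨e, rfl⟩⟩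

theorem coe_monodromy_apply_deck {T : E → E} (hTc : Continuous T) (hT : ∀ e, p (T e) = p e)
    {x y : X} (γ : Path.Homotopic.Quotient x y) (e : p ⁻¹' {x}) :
    (cov.monodromy γ ⟨T e, (hT e).trans e.2⟩ : E) = T (cov.monodromy γ e) := by
  induction γ using Path.Homotopic.Quotient.ind with | mk γ =>
  have hlift : cov.liftPath γ (T e) (γ.source.trans ((hT e).trans e.2).symm) =
      (⟨T, hTc⟩ : C(E, E)).comp (cov.liftPath γ e (γ.source.trans e.2.symm)) := by
    refine ((cov.eq_liftPath_iff' _).mpr ⟨?_, ?_⟩).symm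
    · ext t
      exact (hT _).trans congr($(cov.liftPath_lifts γ e _) t)
    · simp [cov.liftPath_zero]
  exact congr($hlift 1)

theorem exists_monodromy_eq [PathConnectedSpace E] {x : X} (e e' : p ⁻¹' {x}) :
    ∃ q : Path.Homotopic.Quotient x x, cov.monodromy q e = e' := by
  let Γ := Path.Homotopic.Quotient.mk (PathConnectedSpace.somePath (e : E) e')
  exact ⟨(Γ.map ⟨p, cov.continuous⟩).cast e.2.symm e'.2.symm,
    cov.monodromy_eq_of_map_eq Γ rfl⟩

theorem eq_of_monodromy_eq [SimplyConnectedSpace E] {x y : X}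
    {γ γ' : Path.Homotopic.Quotient x y} {e : p ⁻¹' {x}}
    (h : cov.monodromy γ e = cov.monodromy γ' e) : γ = γ' := by
  have hlift : cov.liftPathQuotient γ e =
      (cov.liftPathQuotient γ' e).cast rfl (congrArg Subtype.val h) :=
    Subsingleton.elim _ _
  have hmap := cov.map_liftPathQuotient γ e
  rw [hlift, Path.Homotopic.Quotient.map_cast, cov.map_liftPathQuotient] at hmap
  have hγ := Path.Homotopic.Quotient.cast_heq (γ := γ) e.2 (cov.monodromy γ e).2
  rw [← hmap] at hγ
  exact eq_of_heq (hγ.symm.trans ((Path.Homotopic.Quotient.cast_heq _ _).trans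
    (Path.Homotopic.Quotient.cast_heq _ _)))

theorem exists_deck_apply_eq [SimplyConnectedSpace E] [LocallyPathConnectedSpace E] {e e' : E}
    (h : p e = p e') : ∃ T : E ≃ₜ E, (∀ x, p (T x) = p x) ∧ T e = e' := by
  have lift {a b : E} (hab : p a = p b) : ∃ T : C(E, E), T a = b ∧ p ∘ T = p :=
    (cov.existsUnique_continuousMap_lifts ⟨p, cov.continuous⟩ a b hab.symm).exists
  have inv {a b : E} {S S' : C(E, E)} (hS : p ∘ S = p) (hS' : p ∘ S' = p) (hSa : S a = b)
      (hS'b : S' b = a) : ∀ x, S' (S x) = x :=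
    congrFun (cov.eq_of_comp_eq (S'.continuous.comp S.continuous) continuous_id
      (funext fun x => (congrFun hS' (S x)).trans (congrFun hS x)) a (by simp [hSa, hS'b]))
  obtain ⟨T, hTe, hT⟩ := lift h
  obtain ⟨T', hT'e, hT'⟩ := lift h.symm
  exact ⟨⟨⟨T, T', inv hT hT' hTe hT'e, inv hT' hT hT'e hTe⟩, T.continuous, T'.continuous⟩,
    congrFun hT, hTe⟩

theorem eq_refl_of_forall_trans_comm [SimplyConnectedSpace E] [LocallyPathConnectedSpace E]
    (hcenter : ∀ T : E ≃ₜ E, (∀ x, p (T x) = p x) →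
      (∀ S : E ≃ₜ E, (∀ x, p (S x) = p x) → ∀ x, T (S x) = S (T x)) → T = Homeomorph.refl E)
    {x : X} (e : p ⁻¹' {x}) {c : Path.Homotopic.Quotient x x}
    (hc : ∀ q, c.trans q = q.trans c) : c = .refl x := by
  obtain ⟨T, hT, hTe⟩ := cov.exists_deck_apply_eq (e.2.trans (cov.monodromy c e).2.symm)
  have hTe' : (⟨T e, (hT e).trans e.2⟩ : p ⁻¹' {x}) = cov.monodromy c e := Subtype.ext hTe
  have hTcomm (S : E ≃ₜ E) (hS : ∀ x, p (S x) = p x) : ∀ y, T (S y) = S (T y) := by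
    obtain ⟨q, hq⟩ := cov.exists_monodromy_eq e ⟨S e, (hS e).trans e.2⟩
    have hTS : T (S e) = S (T e) := calc
      T (S e) = T (cov.monodromy q e) := by rw [hq]
      _ = cov.monodromy q ⟨T e, (hT e).trans e.2⟩ :=
        (cov.coe_monodromy_apply_deck T.continuous hT q e).symm
      _ = cov.monodromy (c.trans q) e := by rw [hTe', cov.monodromy_trans_apply]
      _ = cov.monodromy c (cov.monodromy q e) := by rw [hc, cov.monodromy_trans_apply]
      _ = S (cov.monodromy c e) := by
        rw [hq]; exact cov.coe_monodromy_apply_deck S.continuous hS c e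
      _ = S (T e) := by rw [hTe]
    exact congrFun (cov.eq_of_comp_eq (T.continuous.comp S.continuous)
      (S.continuous.comp T.continuous) (funext fun y => by simp [hS, hT]) e hTS)
  have hTid := congrArg (· (e : E)) (hcenter T hT hTcomm)
  refine cov.eq_of_monodromy_eq (e := e) ?_
  rw [cov.monodromy_refl]
  exact Subtype.ext (hTe.symm.trans hTid)

end IsCoveringMap

theorem adapted_paths_homotopic_general
    {N Nh : Type*} [TopologicalSpace N] [TopologicalSpace Nh]
    [ConnectedSpace N]
    [ChartedSpace (EuclideanSpace ℝ (Fin 2)) N]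
    (π : Nh → N) (hπ : IsCoveringMap π) [SimplyConnectedSpace Nh]
    -- the deck transformation group has trivial center
    (hcenter : ∀ T : Nh ≃ₜ Nh, (∀ x, π (T x) = π x) →
      (∀ S : Nh ≃ₜ Nh, (∀ x, π (S x) = π x) → ∀ x, T (S x) = S (T x)) →
      T = Homeomorph.refl Nh)
    (F : N ≃ₜ N)
    (z : N) (α β : Path z (F z))
    (hα : ∀ γ : Path z z, (α.trans ((γ.map F.continuous).trans α.symm)).Homotopic γ)
    (hβ : ∀ γ : Path z z, (β.trans ((γ.map F.continuous).trans β.symm)).Homotopic γ) :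
    α.Homotopic β := by
  have : LocallyPathConnectedSpace N :=
    ChartedSpace.locallyPathConnectedSpace (EuclideanSpace ℝ (Fin 2)) N
  have : PathConnectedSpace N := .of_locallyPathConnectedSpace
  have : LocallyPathConnectedSpace Nh := hπ.isLocalHomeomorph.locallyPathConnectedSpace
  obtain ⟨e⟩ := hπ.nonempty_fiber (F z)
  have hc (q : Path.Homotopic.Quotient (F z) (F z)) :
      ((Path.Homotopic.Quotient.mk α).symm.trans (.mk β)).trans q =
        q.trans ((Path.Homotopic.Quotient.mk α).symm.trans (.mk β)) := by
    obtain ⟨γ, rfl⟩ := Path.Homotopic.Quotient.exists_map_eq F q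
    induction γ using Path.Homotopic.Quotient.ind with | mk γ =>
    exact Path.Homotopic.Quotient.symm_trans_comm_of_conj_eq
      ((Path.Homotopic.Quotient.eq.mpr (hα γ)).trans (Path.Homotopic.Quotient.eq.mpr (hβ γ)).symm)
  exact Path.Homotopic.Quotient.eq.mp (Path.Homotopic.Quotient.eq_of_symm_trans_eq_refl
    (hπ.eq_refl_of_forall_trans_comm hcenter e hc))

/-- If the deck group of the universal cover has trivial center and F
admits a lift commuting with all deck transformations, then any two adapted paths
from z to F(z) are homotopic rel endpoints. -/
theorem adapted_paths_homotopic
    {N Nh : Type*} [TopologicalSpace N] [TopologicalSpace Nh]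
    [T2Space N] [SecondCountableTopology N] [ConnectedSpace N]
    [ChartedSpace (EuclideanSpace ℝ (Fin 2)) N]
    (π : Nh → N) (hπ : IsCoveringMap π) [SimplyConnectedSpace Nh]
    -- the deck transformation group has trivial center
    (hcenter : ∀ T : Nh ≃ₜ Nh, (∀ x, π (T x) = π x) →
      (∀ S : Nh ≃ₜ Nh, (∀ x, π (S x) = π x) → ∀ x, T (S x) = S (T x)) →
      T = Homeomorph.refl Nh)
    (F : N ≃ₜ N)
    -- F admits a lift commuting with all deck transformations
    (Fh : Nh ≃ₜ Nh) (hlift : ∀ x, π (Fh x) = F (π x))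
    (hcomm : ∀ T : Nh ≃ₜ Nh, (∀ x, π (T x) = π x) → ∀ x, Fh (T x) = T (Fh x))
    (z : N) (α β : Path z (F z))
    (hα : ∀ γ : Path z z, (α.trans ((γ.map F.continuous).trans α.symm)).Homotopic γ)
    (hβ : ∀ γ : Path z z, (β.trans ((γ.map F.continuous).trans β.symm)).Homotopic γ) :
    α.Homotopic β :=
  adapted_paths_homotopic_general π hπ hcenter F z α β hα hβ
end

section
/- Let N be an open subset of a surface M, D ⊂ N an open topological disk with closure contained in N, and y, y' two points of D. Let α and β be two paths in N \ cl(D) with the same origin z and the same endpoint z'. If α and β are homotopic rel endpoints in N \ {y'}, then they are homotopic rel endpoints in N \ {y}. -/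
/-!
Choose a homeomorphism `ψ` of `M` that is the identity outside a compact subset of `D` and sends
`y'` to `y`: in the chart `D ≃ₜ ℝ²` it is a composition of two pushes `x ↦ x + φ(x) v` with `φ` a
cone-shaped bump of small Lipschitz constant, extended by the identity. Composing a homotopy in
`N \ {y'}` with `ψ` gives a homotopy in `N \ {y}`, and it still joins `α` to `β` rel endpoints
because these paths avoid `D`, where `ψ` is the identity.
-/

/-- Two paths `α`, `β` with the same endpoints are homotopic rel endpoints within
the subset `S`. -/
def PathHomotopicIn {M : Type*} [TopologicalSpace M]
    (α β : C(unitInterval, M)) (S : Set M) : Prop :=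
  ∃ H : C(unitInterval × unitInterval, M),
    (∀ t, H (0, t) = α t) ∧
    (∀ t, H (1, t) = β t) ∧
    (∀ s, H (s, 0) = α 0) ∧
    (∀ s, H (s, 1) = α 1) ∧
    (∀ p, H p ∈ S)

open Set Metric NNReal

section NormedSpace

variable {E : Type*} [NormedAddCommGroup E] [NormedSpace ℝ E]

theorem norm_bump_smul_sub_le (v : E) {R : ℝ} (hR : 0 < R) (x y : E) :
    ‖max (1 - ‖x‖ / R) 0 • v - max (1 - ‖y‖ / R) 0 • v‖ ≤ ‖v‖ / R * ‖x - y‖ := by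
  rw [← sub_smul, norm_smul, Real.norm_eq_abs, mul_comm, div_mul_eq_mul_div, mul_div_assoc]
  gcongr
  calc |max (1 - ‖x‖ / R) 0 - max (1 - ‖y‖ / R) 0| ≤ |(1 - ‖x‖ / R) - (1 - ‖y‖ / R)| :=
        abs_max_sub_max_le_abs ..
    _ = |‖y‖ - ‖x‖| / R := by
      rw [show (1 - ‖x‖ / R) - (1 - ‖y‖ / R) = (‖y‖ - ‖x‖) / R by ring, abs_div, abs_of_pos hR]
    _ ≤ ‖x - y‖ / R := by gcongr; rw [abs_sub_comm]; exact abs_norm_sub_norm_le x y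

/-- The push `x ↦ x + max (1 - ‖x‖ / R) 0 • v` differs from the identity by a contraction, so it is a
homeomorphism by the Lipschitz inverse function theorem. -/
theorem exists_homeomorph_zero_eq_of_norm_lt [CompleteSpace E] {v : E} {R : ℝ} (hv : ‖v‖ < R) :
    ∃ g : E ≃ₜ E, g 0 = v ∧ ∀ x, R ≤ ‖x‖ → g x = x := by
  have hR : 0 < R := (norm_nonneg v).trans_lt hv
  obtain ⟨c, hc⟩ : ∃ c : ℝ≥0, (c : ℝ) = ‖v‖ / R := ⟨⟨_, by positivity⟩, rfl⟩
  have hf : ApproximatesLinearOn (fun x => x + max (1 - ‖x‖ / R) 0 • v)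
      (ContinuousLinearEquiv.refl ℝ E : E →L[ℝ] E) univ c := by
    rw [ApproximatesLinearOn.approximatesLinearOn_iff_lipschitzOnWith]
    refine (LipschitzWith.of_dist_le_mul fun x y => ?_).lipschitzOnWith
    rw [dist_eq_norm, dist_eq_norm]
    simpa [hc] using norm_bump_smul_sub_le v hR x y
  have hc_lt : Subsingleton E ∨ c < ‖((ContinuousLinearEquiv.refl ℝ E).symm : E →L[ℝ] E)‖₊⁻¹ := by
    rcases subsingleton_or_nontrivial E with h | h
    · exact .inl h
    · right
      rw [← NNReal.coe_lt_coe]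
      simpa [hc] using (div_lt_one hR).2 hv
  refine ⟨hf.toHomeomorph _ hc_lt, ?_, fun x hx => ?_⟩
  · change 0 + _ = v
    simp
  · change x + _ = x
    have : 1 - ‖x‖ / R ≤ 0 := by rw [sub_nonpos, one_le_div hR]; exact hx
    simp [this]

theorem exists_homeomorph_apply_eq [CompleteSpace E] (a b : E) :
    ∃ g : E ≃ₜ E, g a = b ∧ ∃ R, ∀ x, R ≤ ‖x‖ → g x = x := by
  obtain ⟨ga, hga, hga_fix⟩ :=
    exists_homeomorph_zero_eq_of_norm_lt (by linarith [norm_nonneg b] : ‖a‖ < ‖a‖ + ‖b‖ + 1)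
  obtain ⟨gb, hgb, hgb_fix⟩ :=
    exists_homeomorph_zero_eq_of_norm_lt (by linarith [norm_nonneg a] : ‖b‖ < ‖a‖ + ‖b‖ + 1)
  refine ⟨ga.symm.trans gb, by simp [← hga, hgb], ‖a‖ + ‖b‖ + 1, fun x hx => ?_⟩
  rw [Homeomorph.trans_apply, ga.symm_apply_eq.2 (hga_fix x hx).symm, hgb_fix x hx]

end NormedSpace

section ExtendByIdentity

variable {X : Type*} [TopologicalSpace X] [T2Space X]

/-- Off `U` the extension is the identity near every point, because the compact support is
closed in the Hausdorff space `X`. -/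
theorem continuous_ofSubtype_of_isCompact {U : Set X} [DecidablePred (· ∈ U)]
    (hU : IsOpen U) (φ : U ≃ₜ U) {K : Set U} (hK : IsCompact K) (hφ : ∀ u ∉ K, φ u = u) :
    Continuous (Equiv.Perm.ofSubtype φ.toEquiv) := by
  refine continuous_iff_continuousAt.2 fun x => ?_
  by_cases hx : x ∈ U
  · have : ContinuousOn (Equiv.Perm.ofSubtype φ.toEquiv) U := by
      rw [continuousOn_iff_continuous_domRestrict]
      convert continuous_subtype_val.comp φ.continuous using 1
      funext u
      exact Equiv.Perm.ofSubtype_apply_of_mem _ u.2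
    exact this.continuousAt (hU.mem_nhds hx)
  · have hKc : IsClosed (Subtype.val '' K) := (hK.image continuous_subtype_val).isClosed
    have hxK : x ∉ Subtype.val '' K := fun ⟨u, _, hu⟩ => hx (hu ▸ u.2)
    refine continuousAt_id.congr (Filter.eventuallyEq_of_mem (hKc.isOpen_compl.mem_nhds hxK) ?_)
    intro z hz
    by_cases hzU : z ∈ U
    · rw [id, Equiv.Perm.ofSubtype_apply_of_mem _ hzU]
      exact (congrArg Subtype.val (hφ ⟨z, hzU⟩ fun h => hz ⟨_, h, rfl⟩)).symm
    · exact (Equiv.Perm.ofSubtype_apply_of_not_mem _ hzU).symm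

theorem IsOpen.exists_homeomorph_extend_of_isCompact {U : Set X} (hU : IsOpen U)
    (φ : U ≃ₜ U) {K : Set U} (hK : IsCompact K) (hφ : ∀ u ∉ K, φ u = u) :
    ∃ ψ : X ≃ₜ X, (∀ u : U, ψ u = φ u) ∧ ∀ x ∉ U, ψ x = x := by
  classical
  have hφ_symm : ∀ u ∉ K, φ.symm u = u := fun u hu => φ.symm_apply_eq.2 (hφ u hu).symm
  refine ⟨⟨Equiv.Perm.ofSubtype φ.toEquiv, continuous_ofSubtype_of_isCompact hU φ hK hφ,
    continuous_ofSubtype_of_isCompact hU φ.symm hK hφ_symm⟩, fun u => ?_, fun x hx => ?_⟩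
  · exact Equiv.Perm.ofSubtype_apply_of_mem _ u.2
  · exact Equiv.Perm.ofSubtype_apply_of_not_mem _ hx

theorem IsOpen.exists_homeomorph_apply_eq {E : Type*} [NormedAddCommGroup E]
    [NormedSpace ℝ E] [ProperSpace E] {D : Set X} (hD : IsOpen D) (e : D ≃ₜ E) {y y' : X}
    (hy : y ∈ D) (hy' : y' ∈ D) :
    ∃ ψ : X ≃ₜ X, ψ y' = y ∧ MapsTo ψ D D ∧ ∀ x ∉ D, ψ x = x := by
  obtain ⟨g, hg, R, hg_fix⟩ := _root_.exists_homeomorph_apply_eq (e ⟨y', hy'⟩) (e ⟨y, hy⟩)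
  have hK : IsCompact (e.symm '' closedBall 0 R) :=
    (isCompact_closedBall 0 R).image e.symm.continuous
  obtain ⟨ψ, hψD, hψ⟩ := hD.exists_homeomorph_extend_of_isCompact (e.trans (g.trans e.symm)) hK
    fun u hu => by
      have hR : R ≤ ‖e u‖ := le_of_not_ge fun h => hu ⟨e u, mem_closedBall_zero_iff.2 h, by simp⟩
      simp [hg_fix _ hR]
  refine ⟨ψ, by simpa [hg] using hψD ⟨y', hy'⟩, fun x hx => ?_, hψ⟩
  rw [show x = ((⟨x, hx⟩ : D) : X) from rfl, hψD]
  exact Subtype.prop _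

end ExtendByIdentity

namespace PathHomotopicIn

variable {M Y : Type*} [TopologicalSpace M] [TopologicalSpace Y] {α β : C(unitInterval, M)}
  {S T : Set M}

theorem map (h : PathHomotopicIn α β S) (f : C(M, Y)) :
    PathHomotopicIn (f.comp α) (f.comp β) (f '' S) := by
  obtain ⟨H, H0, H1, Hs0, Hs1, HS⟩ := h
  exact ⟨f.comp H, fun t => by simp [H0], fun t => by simp [H1], fun s => by simp [Hs0],
    fun s => by simp [Hs1], fun p => mem_image_of_mem f (HS p)⟩

theorem mono (h : PathHomotopicIn α β S) (hST : S ⊆ T) : PathHomotopicIn α β T := by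
  obtain ⟨H, H0, H1, Hs0, Hs1, HS⟩ := h
  exact ⟨H, H0, H1, Hs0, Hs1, fun p => hST (HS p)⟩

end PathHomotopicIn

theorem homotopic_avoiding_point_of_disk_general
    {M : Type*} [TopologicalSpace M]
    [T2Space M]
    (N : Set M)
    (D : Set M) (hD : IsOpen D)
    (hdisk : Nonempty (↥D ≃ₜ ↥(Metric.ball (0 : EuclideanSpace ℝ (Fin 2)) 1)))
    (hDN : closure D ⊆ N)
    (y y' : M) (hy : y ∈ D) (hy' : y' ∈ D)
    (α β : C(unitInterval, M))
    (hα : ∀ t, α t ∈ N \ closure D) (hβ : ∀ t, β t ∈ N \ closure D)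
    (hhom : PathHomotopicIn α β (N \ {y'})) :
    PathHomotopicIn α β (N \ {y}) := by
  obtain ⟨ψ, hψy, hψD, hψ⟩ :=
    hD.exists_homeomorph_apply_eq (hdisk.some.trans Homeomorph.unitBall.symm) hy hy'
  have hψ_comp : ∀ γ : C(unitInterval, M), (∀ t, γ t ∈ N \ closure D) →
      (ψ : C(M, M)).comp γ = γ := fun γ hγ =>
    ContinuousMap.ext fun t => hψ _ fun h => (hγ t).2 (subset_closure h)
  have hhom_ψ := hhom.map (ψ : C(M, M))
  rw [hψ_comp α hα, hψ_comp β hβ] at hhom_ψ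
  refine hhom_ψ.mono ?_
  rintro _ ⟨x, ⟨hxN, hxy'⟩, rfl⟩
  refine ⟨?_, fun h => hxy' (ψ.injective (h.trans hψy.symm))⟩
  by_cases hxD : x ∈ D
  · exact hDN (subset_closure (hψD hxD))
  · simpa [hψ x hxD] using hxN

/-- Alexander-type lemma: if two paths avoiding the closure of an open
disk D ⊆ N are homotopic rel endpoints in N \ {y'}, where y' ∈ D, then they are
homotopic rel endpoints in N \ {y} for any other point y ∈ D. -/
theorem homotopic_avoiding_point_of_disk
    {M : Type*} [TopologicalSpace M]
    [T2Space M] [SecondCountableTopology M]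
    [ChartedSpace (EuclideanSpace ℝ (Fin 2)) M]
    (N : Set M) (hN : IsOpen N)
    (D : Set M) (hD : IsOpen D)
    (hdisk : Nonempty (↥D ≃ₜ ↥(Metric.ball (0 : EuclideanSpace ℝ (Fin 2)) 1)))
    (hDN : closure D ⊆ N)
    (y y' : M) (hy : y ∈ D) (hy' : y' ∈ D)
    (α β : C(unitInterval, M))
    (hα : ∀ t, α t ∈ N \ closure D) (hβ : ∀ t, β t ∈ N \ closure D)
    (h0 : α 0 = β 0) (h1 : α 1 = β 1)
    (hhom : PathHomotopicIn α β (N \ {y'})) :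
    PathHomotopicIn α β (N \ {y}) :=
  homotopic_avoiding_point_of_disk_general N D hD hdisk hDN y y' hy hy' α β hα hβ hhom
end

section
/- Let D_N be a closed topological disk in a surface N, and let γ and γ' be two paths in the interior of D_N with the same origin x and the same endpoint x'. Then there exists an isotopy J = (G_t)_{t∈[0,1]} from the identity of N to itself, supported in D_N, such that G_t(γ(t)) = γ'(t) for all t ∈ [0,1], and J is homotopic rel endpoints to the constant identity isotopy through isotopies that are the identity outside D_N. -/
/-!
Identify `D` with the closed unit disk by `e`. For `‖x‖ < 1` the push `y ↦ y + max (1 - ‖y‖) 0 • x`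
is a bijection of the closed disk fixing the unit circle and sending `0` to `x`. The inverse of the
push towards `x` followed by the push towards `y`, conjugated by `e` and extended by the identity
off `D`, is a homeomorphism `diskSlide D e x y` of `N` carrying `e⁻¹ x` to `e⁻¹ y`. Take
`G t = diskSlide D e (γ t) (γ' t)` and let `H s t` slide `γ t` to the point at parameter `s` on the
segment from `γ t` to `γ' t`, in the coordinates given by `e`.

Both the continuity of the extension by the identity and the fact that `e` maps the paths into
the open disk rest on this: the points of `D` sent by `e` to the unit circle are exactly those not
in the interior of `D` in the surface `N`. This is invariance of domain in dimension two, proved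
with discrete winding numbers. If `h` is injective on `closedBall z δ` and `q` close to `h z` were
not in `h '' closedBall z δ`, then the odd loop `w ↦ h (z + δ w) - h (z - δ w)` on the unit circle,
whose winding number is nonzero, would be homotopic in `ℂ \ {0}` first to
`w ↦ h (z + δ w) - h z`, then to `w ↦ h (z + δ w) - q`, and finally to a constant.
-/

open Complex Set Metric Filter Topology Function
open scoped Real

local notation "ℝ²" => EuclideanSpace ℝ (Fin 2)

noncomputable section

def unitRoot (n : ℕ) : ℂ := exp (2 * π * I / n)

/-- `2π` times the winding number of `f` restricted to the unit circle, computed from its values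
at the `n`-th roots of unity; it is the true one once consecutive samples differ by less than
their norms. -/
def windingSum (n : ℕ) (f : ℂ → ℂ) : ℝ :=
  ∑ j ∈ Finset.range n, arg (f (unitRoot n ^ (j + 1)) / f (unitRoot n ^ j))

lemma unitRoot_pow_mem_sphere (n j : ℕ) : unitRoot n ^ j ∈ sphere (0 : ℂ) 1 := by
  rw [mem_sphere_zero_iff_norm, norm_pow, unitRoot, norm_exp]
  simp

lemma unitRoot_pow_self {n : ℕ} (hn : n ≠ 0) : unitRoot n ^ n = 1 :=
  (isPrimitiveRoot_exp n hn).pow_eq_one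

lemma unitRoot_pow_half {m : ℕ} (hm : m ≠ 0) : unitRoot (2 * m) ^ m = -1 := by
  rw [unitRoot, ← exp_nat_mul, ← exp_pi_mul_I]
  congr 1
  push_cast
  field_simp

lemma tendsto_unitRoot : Tendsto unitRoot atTop (𝓝 1) := by
  have := (continuous_exp.tendsto 0).comp (tendsto_const_div_atTop_nhds_zero_nat (2 * π * I))
  rwa [exp_zero] at this

lemma norm_mul_exp_sum_arg (a : ℕ → ℂ) {n : ℕ} (ha : ∀ j < n, a j ≠ 0) :
    (‖a n / a 0‖ : ℂ) * exp ((∑ j ∈ Finset.range n, arg (a (j + 1) / a j) : ℝ) * I) =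
      a n / a 0 := by
  induction n with
  | zero => rcases eq_or_ne (a 0) 0 with h | h <;> simp [h]
  | succ n ih =>
    have hn : a (n + 1) / a 0 = a n / a 0 * (a (n + 1) / a n) := by
      field_simp [ha n n.lt_succ_self]
    rw [hn, Finset.sum_range_succ, ofReal_add, add_mul, exp_add, norm_mul, ofReal_mul]
    calc _ = (‖a n / a 0‖ * exp ((∑ j ∈ Finset.range n, arg (a (j + 1) / a j) : ℝ) * I)) *
          (‖a (n + 1) / a n‖ * exp (arg (a (n + 1) / a n) * I)) := by ring
      _ = _ := by rw [ih fun j hj => ha j (by omega), norm_mul_exp_arg_mul_I]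

lemma mem_zmultiples_of_exp_mul_I_eq_one {S : ℝ} (h : exp (S * I) = 1) :
    S ∈ AddSubgroup.zmultiples (2 * π) := by
  obtain ⟨k, hk⟩ := exp_eq_one_iff.1 h
  refine ⟨k, ?_⟩
  simpa [mul_comm] using (congrArg im hk).symm

lemma windingSum_mem_zmultiples {n : ℕ} (hn : n ≠ 0) {f : ℂ → ℂ}
    (hf : ∀ w ∈ sphere (0 : ℂ) 1, f w ≠ 0) :
    windingSum n f ∈ AddSubgroup.zmultiples (2 * π) := by
  have ha : ∀ j, f (unitRoot n ^ j) ≠ 0 := fun j => hf _ (unitRoot_pow_mem_sphere n j)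
  have := norm_mul_exp_sum_arg (fun j => f (unitRoot n ^ j)) (n := n) fun j _ => ha j
  simp only [unitRoot_pow_self hn, pow_zero] at this
  rw [div_self (by simpa using ha 0), norm_one, ofReal_one, one_mul] at this
  exact mem_zmultiples_of_exp_mul_I_eq_one this

lemma windingSum_ne_zero_of_odd {m : ℕ} (hm : m ≠ 0) {f : ℂ → ℂ}
    (hodd : ∀ w, f (-w) = -f w) (hf : ∀ w ∈ sphere (0 : ℂ) 1, f w ≠ 0) :
    windingSum (2 * m) f ≠ 0 := by
  set a : ℕ → ℂ := fun j => f (unitRoot (2 * m) ^ j)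
  have ha : ∀ j, a j ≠ 0 := fun j => hf _ (unitRoot_pow_mem_sphere _ j)
  have hshift : ∀ j, a (m + j) = -a j := fun j => by
    simp only [a, pow_add, unitRoot_pow_half hm, neg_one_mul, hodd]
  have hhalf : windingSum (2 * m) f = 2 * ∑ j ∈ Finset.range m, arg (a (j + 1) / a j) := by
    rw [windingSum, two_mul m, Finset.sum_range_add, two_mul, ← two_mul m]
    congr 1
    refine Finset.sum_congr rfl fun j _ => ?_
    change arg (a (m + j + 1) / a (m + j)) = _
    rw [add_assoc, hshift, hshift, neg_div_neg_eq]
  have hexp := norm_mul_exp_sum_arg a (n := m) fun j _ => ha j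
  rw [show a m = -a 0 by simpa using hshift 0, neg_div, div_self (ha 0)] at hexp
  rw [hhalf]
  intro h0
  rw [show ∑ j ∈ Finset.range m, arg (a (j + 1) / a j) = 0 by linarith] at hexp
  norm_num at hexp

lemma windingSum_const (n : ℕ) (c : ℂ) : windingSum n (fun _ => c) = 0 := by
  rcases eq_or_ne c 0 with rfl | hc <;> simp [windingSum, *]

lemma div_mem_slitPlane_of_norm_sub_lt {u v : ℂ} (h : ‖u - v‖ < ‖v‖) : u / v ∈ slitPlane := by
  have hv : v ≠ 0 := norm_pos_iff.1 ((norm_nonneg _).trans_lt h)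
  have := mem_slitPlane_of_norm_lt_one (z := (u - v) / v) (by
    rwa [norm_div, div_lt_one (norm_pos_iff.2 hv)])
  rwa [sub_div, div_self hv, add_sub_cancel] at this

section Homotopy

variable {α : Type*} {S : Set α} {F : α → ℂ → ℂ}

lemma windingSum_eq_of_norm_sub_lt_norm [TopologicalSpace α] (hS : IsPreconnected S) {n : ℕ}
    (hn : n ≠ 0) (hF : ContinuousOn (uncurry F) (S ×ˢ sphere 0 1))
    (hclose : ∀ s ∈ S, ∀ w ∈ sphere (0 : ℂ) 1, ‖F s (w * unitRoot n) - F s w‖ < ‖F s w‖)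
    {s₀ s₁ : α} (h₀ : s₀ ∈ S) (h₁ : s₁ ∈ S) :
    windingSum n (F s₀) = windingSum n (F s₁) := by
  have hne : ∀ s ∈ S, ∀ w ∈ sphere (0 : ℂ) 1, F s w ≠ 0 := fun s hs w hw =>
    norm_pos_iff.1 ((norm_nonneg _).trans_lt (hclose s hs w hw))
  have hpt : ∀ j, ContinuousOn (fun s => F s (unitRoot n ^ j)) S := fun j =>
    hF.comp (continuousOn_id.prodMk continuousOn_const)
      fun _ hs => ⟨hs, unitRoot_pow_mem_sphere n j⟩
  refine hS.constant_of_mapsTo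
    (SetLike.isDiscrete_iff_discreteTopology.2 inferInstance) ?_
    (fun s hs => windingSum_mem_zmultiples hn (hne s hs)) h₀ h₁
  refine continuousOn_finsetSum _ fun j _ s hs => ?_
  have hslit := div_mem_slitPlane_of_norm_sub_lt (pow_succ (unitRoot n) j ▸
    hclose s hs _ (unitRoot_pow_mem_sphere n j))
  exact (continuousAt_arg hslit).comp_continuousWithinAt
    (f := fun s => F s (unitRoot n ^ (j + 1)) / F s (unitRoot n ^ j))
    (((hpt (j + 1)).div (hpt j) fun s hs => hne s hs _ (unitRoot_pow_mem_sphere n j)) s hs)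

lemma eventually_norm_sub_lt_norm [PseudoMetricSpace α] (hS : IsCompact S)
    (hF : ContinuousOn (uncurry F) (S ×ˢ sphere 0 1))
    (hne : ∀ s ∈ S, ∀ w ∈ sphere (0 : ℂ) 1, F s w ≠ 0) :
    ∀ᶠ n in atTop, ∀ s ∈ S, ∀ w ∈ sphere (0 : ℂ) 1,
      ‖F s (w * unitRoot n) - F s w‖ < ‖F s w‖ := by
  have hK := hS.prod (isCompact_sphere (0 : ℂ) 1)
  obtain ⟨ρ, hρ, hρF⟩ := hK.exists_forall_le' hF.norm (a := 0)
    fun p hp => norm_pos_iff.2 (hne p.1 hp.1 p.2 hp.2)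
  obtain ⟨δ, hδ, hunif⟩ :=
    Metric.uniformContinuousOn_iff.1 (hK.uniformContinuousOn_of_continuous hF) ρ hρ
  filter_upwards [tendsto_unitRoot.eventually (ball_mem_nhds 1 hδ)] with n hn s hs w hw
  have hw' : w * unitRoot n ∈ sphere (0 : ℂ) 1 := by
    simpa [norm_mul, mem_sphere_zero_iff_norm.1 hw] using unitRoot_pow_mem_sphere n 1
  have hdist : dist (s, w * unitRoot n) (s, w) < δ := by
    rw [Prod.dist_eq, dist_self, dist_eq_norm, ← mul_sub_one, norm_mul,
      mem_sphere_zero_iff_norm.1 hw, one_mul, ← dist_eq_norm]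
    simpa using hn
  calc ‖F s (w * unitRoot n) - F s w‖ < ρ := by
        simpa [dist_eq_norm] using hunif _ ⟨hs, hw'⟩ _ ⟨hs, hw⟩ hdist
    _ ≤ ‖F s w‖ := hρF (s, w) ⟨hs, hw⟩

theorem eventually_windingSum_eq [PseudoMetricSpace α] (hS : IsCompact S) (hS' : IsPreconnected S)
    (hF : ContinuousOn (uncurry F) (S ×ˢ sphere 0 1))
    (hne : ∀ s ∈ S, ∀ w ∈ sphere (0 : ℂ) 1, F s w ≠ 0) {s₀ s₁ : α} (h₀ : s₀ ∈ S) (h₁ : s₁ ∈ S) :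
    ∀ᶠ n in atTop, windingSum n (F s₀) = windingSum n (F s₁) := by
  filter_upwards [eventually_norm_sub_lt_norm hS hF hne, eventually_ne_atTop 0] with n hclose hn
  exact windingSum_eq_of_norm_sub_lt_norm hS' hn hF hclose h₀ h₁

end Homotopy

section InvarianceOfDomain

variable {h : ℂ → ℂ} {z : ℂ} {δ : ℝ}

lemma add_mul_mem_closedBall {r : ℝ} {w : ℂ} (hw : w ∈ sphere (0 : ℂ) 1) (hr : |r| ≤ δ) :
    z + r * w ∈ closedBall z δ := by
  simpa [dist_eq_norm, norm_mul, mem_sphere_zero_iff_norm.1 hw] using hr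

lemma add_mul_mem_sphere {w : ℂ} (hw : w ∈ sphere (0 : ℂ) 1) (hδ : 0 ≤ δ) :
    z + δ * w ∈ sphere z δ := by
  simp [mem_sphere_zero_iff_norm.1 hw, abs_of_nonneg hδ]

lemma tendsto_two_mul_atTop : Tendsto (fun n : ℕ => 2 * n) atTop atTop :=
  tendsto_id.const_mul_atTop' two_pos

lemma eventually_windingSum_sub_center_ne_zero (hδ : 0 < δ) (hc : ContinuousOn h (closedBall z δ))
    (hi : InjOn h (closedBall z δ)) :
    ∀ᶠ n in atTop, windingSum (2 * n) (fun w => h (z + δ * w) - h z) ≠ 0 := by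
  set A : ℝ → ℂ → ℂ := fun s w => h (z + δ * w) - h (z + ((-(s * δ) : ℝ) : ℂ) * w)
  have hδ' : |δ| ≤ δ := (abs_of_pos hδ).le
  have hr : ∀ s ∈ Icc (0 : ℝ) 1, |-(s * δ)| ≤ δ := fun s hs => by
    rw [abs_neg, abs_of_nonneg (mul_nonneg hs.1 hδ.le)]
    nlinarith [hs.2]
  have hA : ContinuousOn (uncurry A) (Icc 0 1 ×ˢ sphere 0 1) :=
    (hc.comp (by fun_prop) fun p hp => add_mul_mem_closedBall hp.2 hδ').sub
      (hc.comp (by fun_prop) fun p hp => add_mul_mem_closedBall hp.2 (hr p.1 hp.1))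
  have hne : ∀ s ∈ Icc (0 : ℝ) 1, ∀ w ∈ sphere (0 : ℂ) 1, A s w ≠ 0 := by
    intro s hs w hw heq
    have := hi (add_mul_mem_closedBall hw hδ') (add_mul_mem_closedBall hw (hr s hs))
      (sub_eq_zero.1 heq)
    have hw0 : w ≠ 0 := ne_zero_of_mem_sphere one_ne_zero ⟨w, hw⟩
    have : (((1 + s) * δ : ℝ) : ℂ) * w = 0 := by
      push_cast at this ⊢
      linear_combination this
    simp only [mul_eq_zero, ofReal_eq_zero, hw0, or_false] at this
    rcases this with h1 | h1 <;> linarith [hs.1]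
  have hodd : ∀ w, A 1 (-w) = -A 1 w := fun w => by
    simp only [A]
    push_cast
    ring_nf
  filter_upwards [tendsto_two_mul_atTop.eventually (eventually_windingSum_eq isCompact_Icc
    isPreconnected_Icc hA hne (left_mem_Icc.2 zero_le_one) (right_mem_Icc.2 zero_le_one)),
    eventually_ne_atTop 0] with n hn hn0
  have hA0 : A 0 = fun w => h (z + δ * w) - h z := by simp [A]
  rw [← hA0, hn]
  exact windingSum_ne_zero_of_odd hn0 hodd (hne 1 (right_mem_Icc.2 zero_le_one))

lemma eventually_windingSum_eq_zero (hδ : 0 ≤ δ) (hc : ContinuousOn h (closedBall z δ)) {p : ℂ}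
    (hp : p ∉ h '' closedBall z δ) :
    ∀ᶠ n in atTop, windingSum n (fun w => h (z + δ * w) - p) = 0 := by
  set C : ℝ → ℂ → ℂ := fun s w => h (z + (((1 - s) * δ : ℝ) : ℂ) * w) - p
  have hr : ∀ s ∈ Icc (0 : ℝ) 1, |(1 - s) * δ| ≤ δ := fun s hs => by
    rw [abs_of_nonneg (mul_nonneg (by linarith [hs.2]) hδ)]
    nlinarith [hs.1]
  have hC : ContinuousOn (uncurry C) (Icc 0 1 ×ˢ sphere 0 1) :=
    (hc.comp (by fun_prop) fun q hq => add_mul_mem_closedBall hq.2 (hr q.1 hq.1)).sub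
      continuousOn_const
  have hne : ∀ s ∈ Icc (0 : ℝ) 1, ∀ w ∈ sphere (0 : ℂ) 1, C s w ≠ 0 := fun s hs w hw heq =>
    hp ⟨_, add_mul_mem_closedBall hw (hr s hs), sub_eq_zero.1 heq⟩
  filter_upwards [eventually_windingSum_eq isCompact_Icc isPreconnected_Icc hC hne
    (left_mem_Icc.2 zero_le_one) (right_mem_Icc.2 zero_le_one)] with n hn
  have hC0 : C 0 = fun w => h (z + δ * w) - p := by simp [C]
  have hC1 : C 1 = fun _ => h z - p := by simp [C]
  rw [← hC0, hn, hC1, windingSum_const]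

lemma eventually_windingSum_eq_of_segment (hδ : 0 ≤ δ) (hc : ContinuousOn h (closedBall z δ))
    {p p' : ℂ} (hseg : ∀ s ∈ Icc (0 : ℝ) 1, p + s • (p' - p) ∉ h '' sphere z δ) :
    ∀ᶠ n in atTop,
      windingSum n (fun w => h (z + δ * w) - p) = windingSum n (fun w => h (z + δ * w) - p') := by
  set B : ℝ → ℂ → ℂ := fun s w => h (z + δ * w) - (p + s • (p' - p))
  have hB : ContinuousOn (uncurry B) (Icc 0 1 ×ˢ sphere 0 1) :=
    (hc.comp (by fun_prop) fun q hq => sphere_subset_closedBall (add_mul_mem_sphere hq.2 hδ)).sub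
      (by fun_prop)
  have hne : ∀ s ∈ Icc (0 : ℝ) 1, ∀ w ∈ sphere (0 : ℂ) 1, B s w ≠ 0 := fun s hs w hw heq =>
    hseg s hs ⟨_, add_mul_mem_sphere hw hδ, sub_eq_zero.1 heq⟩
  filter_upwards [eventually_windingSum_eq isCompact_Icc isPreconnected_Icc hB hne
    (left_mem_Icc.2 zero_le_one) (right_mem_Icc.2 zero_le_one)] with n hn
  convert hn using 3 <;> simp [B]

/-- Invariance of domain in the plane, local form. -/
theorem Complex.mem_interior_image_closedBall_of_injOn (hδ : 0 < δ)
    (hc : ContinuousOn h (closedBall z δ)) (hi : InjOn h (closedBall z δ)) :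
    h z ∈ interior (h '' closedBall z δ) := by
  have hsph : IsClosed (h '' sphere z δ) :=
    ((isCompact_sphere z δ).image_of_continuousOn (hc.mono sphere_subset_closedBall)).isClosed
  have hz : h z ∉ h '' sphere z δ := by
    rintro ⟨w, hw, hwz⟩
    obtain rfl := hi (sphere_subset_closedBall hw) (mem_closedBall_self hδ.le) hwz
    exact hδ.ne (by simpa using hw)
  obtain ⟨ε, hε, hball⟩ := Metric.isOpen_iff.1 hsph.isOpen_compl _ hz
  refine mem_interior.2 ⟨ball (h z) ε, fun q hq => ?_, isOpen_ball, mem_ball_self hε⟩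
  by_contra hq'
  have hseg : ∀ s ∈ Icc (0 : ℝ) 1, h z + s • (q - h z) ∉ h '' sphere z δ := fun s hs =>
    hball ((convex_ball _ _).add_smul_sub_mem (mem_ball_self hε) hq hs)
  obtain ⟨n, hne, hseg, hzero⟩ := ((eventually_windingSum_sub_center_ne_zero hδ hc hi).and
    ((tendsto_two_mul_atTop.eventually (eventually_windingSum_eq_of_segment hδ.le hc hseg)).and
      (tendsto_two_mul_atTop.eventually (eventually_windingSum_eq_zero hδ.le hc hq')))).exists
  exact hne (hseg.trans hzero)

theorem Complex.isOpen_image_of_continuousOn_injOn {U : Set ℂ} (hU : IsOpen U)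
    (hc : ContinuousOn h U) (hi : InjOn h U) : IsOpen (h '' U) := by
  refine isOpen_iff_mem_nhds.2 ?_
  rintro _ ⟨z, hz, rfl⟩
  obtain ⟨δ, hδ, hδU⟩ := Metric.nhds_basis_closedBall.mem_iff.1 (hU.mem_nhds hz)
  exact mem_interior_iff_mem_nhds.1 (interior_mono (image_mono hδU)
    (Complex.mem_interior_image_closedBall_of_injOn hδ (hc.mono hδU) (hi.mono hδU)))

end InvarianceOfDomain

theorem Homeomorph.isOpen_image_of_continuousOn_injOn {X : Type*} [TopologicalSpace X]
    (φ : X ≃ₜ ℂ) {h : X → X} {U : Set X} (hU : IsOpen U) (hc : ContinuousOn h U)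
    (hi : InjOn h U) : IsOpen (h '' U) := by
  have hmaps : MapsTo φ.symm (φ '' U) U := by
    rintro _ ⟨u, hu, rfl⟩
    simpa using hu
  have := Complex.isOpen_image_of_continuousOn_injOn (h := φ ∘ h ∘ φ.symm) (φ.isOpenMap U hU)
    (φ.continuous.comp_continuousOn (hc.comp φ.symm.continuous.continuousOn hmaps))
    (φ.injective.injOn.comp (hi.comp φ.symm.injective.injOn hmaps) (mapsTo_univ _ _))
  convert φ.symm.isOpenMap _ this
  simp [image_image]

lemma Homeomorph.exists_continuousOn_injOn_extension {X Y : Type*} [TopologicalSpace X]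
    [TopologicalSpace Y] [Nonempty Y] {s : Set X} {t : Set Y} (e : s ≃ₜ t) :
    ∃ f : X → Y, ContinuousOn f s ∧ InjOn f s ∧ ∀ x : s, f x = e x := by
  classical
  refine ⟨fun x => if hx : x ∈ s then e ⟨x, hx⟩ else Classical.arbitrary Y, ?_, ?_,
    fun x => by simp⟩
  · rw [continuousOn_iff_continuous_domRestrict]
    convert continuous_subtype_val.comp e.continuous using 1
    ext x
    simp
  · intro a ha b hb hab
    simp only [ha, hb, dite_true] at hab
    simpa using e.injective (Subtype.ext hab)

section Surface

variable {N : Type*} [TopologicalSpace N] [ChartedSpace ℝ² N] {D : Set N}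

lemma mem_ball_of_mem_interior (e : D ≃ₜ closedBall (0 : ℝ²) 1) {x : D}
    (hxD : (x : N) ∈ interior D) : (e x : ℝ²) ∈ ball 0 1 := by
  set ψ := chartAt ℝ² (x : N)
  have hx := mem_chart_source ℝ² (x : N)
  obtain ⟨f, hfc, hfi, hfe⟩ := e.exists_continuousOn_injOn_extension
  set V := ψ '' (interior D ∩ ψ.source)
  have hV : IsOpen V :=
    ψ.isOpen_image_of_subset_source (isOpen_interior.inter ψ.open_source) inter_subset_right
  have hVt : V ⊆ ψ.target := by
    rintro _ ⟨m, hm, rfl⟩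
    exact ψ.map_source hm.2
  have hmaps : MapsTo ψ.symm V D := by
    rintro _ ⟨m, hm, rfl⟩
    rw [ψ.left_inv hm.2]
    exact interior_subset hm.1
  have hopen := Homeomorph.isOpen_image_of_continuousOn_injOn
    Complex.orthonormalBasisOneI.repr.toHomeomorph.symm hV
    (hfc.comp (ψ.continuousOn_symm.mono hVt) hmaps) (hfi.comp (ψ.symm.injOn.mono hVt) hmaps)
  have hsub : (f ∘ ψ.symm) '' V ⊆ closedBall 0 1 := by
    rintro _ ⟨u, hu, rfl⟩
    simp [hfe ⟨_, hmaps hu⟩]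
  have hxV : (e x : ℝ²) ∈ (f ∘ ψ.symm) '' V :=
    ⟨ψ x, ⟨x, ⟨hxD, hx⟩, rfl⟩, by simp [ψ.left_inv hx, hfe]⟩
  simpa [interior_closedBall _ one_ne_zero] using interior_maximal hsub hopen hxV

lemma mem_interior_of_mem_ball (e : D ≃ₜ closedBall (0 : ℝ²) 1) {x : D}
    (hxB : (e x : ℝ²) ∈ ball 0 1) : (x : N) ∈ interior D := by
  set ψ := chartAt ℝ² (x : N)
  have hx := mem_chart_source ℝ² (x : N)
  have : Nonempty N := ⟨x⟩
  obtain ⟨g, hgc, hgi, hge⟩ := e.symm.exists_continuousOn_injOn_extension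
  set W := ball (0 : ℝ²) 1 ∩ g ⁻¹' ψ.source
  have hWB : W ⊆ closedBall 0 1 := inter_subset_left.trans ball_subset_closedBall
  have hW : IsOpen W :=
    (hgc.mono ball_subset_closedBall).isOpen_inter_preimage isOpen_ball ψ.open_source
  have hmaps : MapsTo g W ψ.source := fun w hw => hw.2
  have hopen := Homeomorph.isOpen_image_of_continuousOn_injOn
    Complex.orthonormalBasisOneI.repr.toHomeomorph.symm hW
    (ψ.continuousOn.comp (hgc.mono hWB) hmaps) (ψ.injOn.comp (hgi.mono hWB) hmaps)
  have hgx : g (e x) = x := by simp [hge]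
  refine mem_interior.2 ⟨ψ.source ∩ ψ ⁻¹' ((ψ ∘ g) '' W), ?_, ψ.isOpen_inter_preimage hopen, hx,
    e x, ⟨hxB, by rw [mem_preimage, hgx]; exact hx⟩, by simp [hgx]⟩
  rintro m ⟨hm, w, hw, hwm⟩
  obtain rfl := ψ.injOn hw.2 hm hwm
  simp [hge ⟨w, hWB hw⟩]

theorem mem_interior_iff_mem_ball (e : D ≃ₜ closedBall (0 : ℝ²) 1) (x : D) :
    (x : N) ∈ interior D ↔ (e x : ℝ²) ∈ ball 0 1 :=
  ⟨mem_ball_of_mem_interior e, mem_interior_of_mem_ball e⟩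

end Surface

theorem continuous_equiv_symm_of_compact {P K : Type*} [TopologicalSpace P] [CompactSpace P]
    [T2Space P] [TopologicalSpace K] [CompactSpace K] [T2Space K] (φ : P → K ≃ K)
    (hφ : Continuous fun q : P × K => φ q.1 q.2) :
    Continuous fun q : P × K => (φ q.1).symm q.2 :=
  have hshear : Continuous (Equiv.prodShear (Equiv.refl P) φ) := continuous_fst.prodMk hφ
  continuous_snd.comp hshear.homeoOfEquivCompactToT2.symm.continuous

section DiskPush

variable {E : Type*} [NormedAddCommGroup E] [NormedSpace ℝ E]

def diskPush (x y : E) : E := y + max (1 - ‖y‖) 0 • x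

lemma continuous_diskPush : Continuous (uncurry (diskPush : E → E → E)) := by
  unfold diskPush uncurry
  fun_prop

lemma diskPush_of_one_le_norm (x : E) {y : E} (hy : 1 ≤ ‖y‖) : diskPush x y = y := by
  simp [diskPush, max_eq_right (sub_nonpos.2 hy)]

lemma diskPush_zero (x : E) : diskPush x 0 = x := by
  simp [diskPush]

lemma diskPush_injective {x : E} (hx : ‖x‖ < 1) : Injective (diskPush x) := by
  intro a b hab
  have hlip : |max (1 - ‖b‖) 0 - max (1 - ‖a‖) 0| ≤ ‖a - b‖ :=
    (abs_max_sub_max_le_abs _ _ _).trans (by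
      rw [sub_sub_sub_cancel_left]
      exact abs_norm_sub_norm_le a b)
  have hab' : a - b = (max (1 - ‖b‖) 0 - max (1 - ‖a‖) 0) • x := by
    rw [sub_smul]
    unfold diskPush at hab
    linear_combination (norm := module) hab
  have hle : ‖a - b‖ ≤ ‖a - b‖ * ‖x‖ := by
    calc ‖a - b‖ = |max (1 - ‖b‖) 0 - max (1 - ‖a‖) 0| * ‖x‖ := by
          rw [hab', norm_smul, Real.norm_eq_abs]
      _ ≤ ‖a - b‖ * ‖x‖ := by gcongr
  have : ‖a - b‖ = 0 := by nlinarith [norm_nonneg (a - b)]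
  exact sub_eq_zero.1 (norm_eq_zero.1 this)

lemma diskPush_surjective (x : E) : Surjective (diskPush x) := by
  intro w
  set c : ℝ → ℝ := fun r => max (1 - r) 0
  set G : ℝ → ℝ := fun r => ‖w - c r • x‖ - r
  have hG : ContinuousOn G (Icc 0 (‖w‖ + 1)) := by
    simp only [G, c]
    fun_prop
  have h0 : 0 ∈ Icc (G (‖w‖ + 1)) (G 0) := by
    constructor
    · simp [G, c]
    · simp [G]
  obtain ⟨r, -, hr⟩ := intermediate_value_Icc' (by positivity) hG h0
  have hnorm : ‖w - c r • x‖ = r := by linarith [show G r = 0 from hr]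
  refine ⟨w - c r • x, ?_⟩
  simp only [diskPush, hnorm, c]
  abel

lemma norm_diskPush_le_one_iff {x : E} (hx : ‖x‖ < 1) {y : E} :
    ‖diskPush x y‖ ≤ 1 ↔ ‖y‖ ≤ 1 := by
  refine ⟨fun h => ?_, fun hy => ?_⟩
  · by_contra hy
    rw [diskPush_of_one_le_norm x (not_le.1 hy).le] at h
    exact hy h
  · calc ‖diskPush x y‖ ≤ ‖y‖ + max (1 - ‖y‖) 0 * ‖x‖ := by
          refine (norm_add_le _ _).trans_eq ?_
          rw [norm_smul, Real.norm_of_nonneg (le_max_right _ _)]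
      _ ≤ 1 := by
          rw [max_eq_left (sub_nonneg.2 hy)]
          nlinarith [norm_nonneg x, norm_nonneg y]

def diskPushEquiv (x : ball (0 : E) 1) : Equiv.Perm (closedBall (0 : E) 1) :=
  (Equiv.ofBijective _ ⟨diskPush_injective (mem_ball_zero_iff.1 x.2),
    diskPush_surjective (x : E)⟩).subtypeEquiv fun _ => by
      rw [mem_closedBall_zero_iff, mem_closedBall_zero_iff]
      exact (norm_diskPush_le_one_iff (mem_ball_zero_iff.1 x.2)).symm

lemma diskPushEquiv_of_one_le_norm (x : ball (0 : E) 1) {y : closedBall (0 : E) 1}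
    (hy : 1 ≤ ‖(y : E)‖) : diskPushEquiv x y = y :=
  Subtype.ext (diskPush_of_one_le_norm _ hy)

lemma diskPushEquiv_zero (x : ball (0 : E) 1) :
    diskPushEquiv x ⟨0, mem_closedBall_self zero_le_one⟩ = ⟨x, ball_subset_closedBall x.2⟩ :=
  Subtype.ext (diskPush_zero _)

lemma continuous_diskPushEquiv {P : Type*} [TopologicalSpace P] {ξ : P → ball (0 : E) 1}
    (hξ : Continuous ξ) :
    Continuous fun q : P × closedBall (0 : E) 1 => diskPushEquiv (ξ q.1) q.2 :=
  (continuous_diskPush.comp ((continuous_subtype_val.comp (hξ.comp continuous_fst)).prodMk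
    (continuous_subtype_val.comp continuous_snd))).subtype_mk _

def ballSlide (x y : ball (0 : E) 1) : Equiv.Perm (closedBall (0 : E) 1) :=
  (diskPushEquiv x).symm.trans (diskPushEquiv y)

lemma ballSlide_self (x : ball (0 : E) 1) : ballSlide x x = Equiv.refl _ :=
  Equiv.symm_trans_self _

lemma ballSlide_apply_self (x y : ball (0 : E) 1) :
    ballSlide x y ⟨x, ball_subset_closedBall x.2⟩ = ⟨y, ball_subset_closedBall y.2⟩ := by
  rw [ballSlide, Equiv.trans_apply, ← diskPushEquiv_zero x, Equiv.symm_apply_apply,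
    diskPushEquiv_zero]

lemma ballSlide_of_one_le_norm (x y : ball (0 : E) 1) {z : closedBall (0 : E) 1}
    (hz : 1 ≤ ‖(z : E)‖) : ballSlide x y z = z := by
  rw [ballSlide, Equiv.trans_apply,
    (Equiv.symm_apply_eq _).2 (diskPushEquiv_of_one_le_norm x hz).symm,
    diskPushEquiv_of_one_le_norm y hz]

lemma continuous_ballSlide [ProperSpace E] {P : Type*} [TopologicalSpace P] [CompactSpace P]
    [T2Space P] {ξ ζ : P → ball (0 : E) 1} (hξ : Continuous ξ) (hζ : Continuous ζ) :
    Continuous fun q : P × closedBall (0 : E) 1 => ballSlide (ξ q.1) (ζ q.1) q.2 :=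
  (continuous_diskPushEquiv hζ).comp (continuous_fst.prodMk (continuous_equiv_symm_of_compact
    (fun p => diskPushEquiv (ξ p)) (continuous_diskPushEquiv hξ)))

def ballSegment (x y : ball (0 : E) 1) (s : unitInterval) : ball (0 : E) 1 :=
  ⟨AffineMap.lineMap (x : E) y (s : ℝ), (convex_ball 0 1).lineMap_mem x.2 y.2 s.2⟩

@[simp] lemma ballSegment_zero (x y : ball (0 : E) 1) : ballSegment x y 0 = x :=
  Subtype.ext (AffineMap.lineMap_apply_zero _ _)

@[simp] lemma ballSegment_one (x y : ball (0 : E) 1) : ballSegment x y 1 = y :=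
  Subtype.ext (AffineMap.lineMap_apply_one _ _)

@[simp] lemma ballSegment_same (x : ball (0 : E) 1) (s : unitInterval) : ballSegment x x s = x :=
  Subtype.ext (AffineMap.lineMap_same_apply _ _)

lemma Continuous.ballSegment {P : Type*} [TopologicalSpace P] {ξ ζ : P → ball (0 : E) 1}
    {σ : P → unitInterval} (hξ : Continuous ξ) (hζ : Continuous ζ) (hσ : Continuous σ) :
    Continuous fun p => _root_.ballSegment (ξ p) (ζ p) (σ p) :=
  (Continuous.lineMap (continuous_subtype_val.comp hξ) (continuous_subtype_val.comp hζ)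
    (continuous_subtype_val.comp hσ)).subtype_mk _

end DiskPush

theorem continuous_ofSubtype_of_fixes_frontier {P X : Type*} [TopologicalSpace P]
    [TopologicalSpace X] {D : Set X} [DecidablePred (· ∈ D)] (hD : IsClosed D)
    {σ : P → Equiv.Perm D} (hσ : Continuous fun q : P × D => (σ q.1 q.2 : X))
    (hfix : ∀ p (x : D), (x : X) ∉ interior D → σ p x = x) :
    Continuous fun q : P × X => Equiv.Perm.ofSubtype (σ q.1) q.2 := by
  have hcover : Prod.snd ⁻¹' D ∪ Prod.snd ⁻¹' (interior D)ᶜ = (univ : Set (P × X)) :=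
    eq_univ_of_forall fun q => (em (q.2 ∈ D)).imp id fun h => mt (interior_subset ·) h
  rw [← continuousOn_univ, ← hcover, continuousOn_union_iff_of_isClosed
    (hD.preimage continuous_snd) (isOpen_interior.isClosed_compl.preimage continuous_snd)]
  constructor
  · rw [continuousOn_iff_continuous_domRestrict]
    convert hσ.comp ((continuous_fst.comp continuous_subtype_val).prodMk
      ((continuous_snd.comp continuous_subtype_val).subtype_mk
        fun r : (Prod.snd ⁻¹' D : Set (P × X)) => r.2)) using 1
    funext r
    exact Equiv.Perm.ofSubtype_apply_of_mem _ (show r.1.2 ∈ D from r.2)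
  · refine continuous_snd.continuousOn.congr fun q hq => ?_
    by_cases h : q.2 ∈ D
    · simp [Equiv.Perm.ofSubtype_apply_of_mem _ h, hfix q.1 ⟨q.2, h⟩ hq]
    · exact Equiv.Perm.ofSubtype_apply_of_not_mem _ h

section DiskSlide

variable {N : Type*} [TopologicalSpace N] (D : Set N)

section

variable {E : Type*} [NormedAddCommGroup E] [NormedSpace ℝ E] (e : D ≃ₜ closedBall (0 : E) 1)

open scoped Classical in
def diskSlide (x y : ball (0 : E) 1) : Equiv.Perm N :=
  Equiv.Perm.ofSubtype (e.symm.toEquiv.permCongr (ballSlide x y))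

variable {D}

lemma diskSlide_apply_of_notMem (x y : ball (0 : E) 1) {m : N} (hm : m ∉ D) :
    diskSlide D e x y m = m := by
  classical
  exact Equiv.Perm.ofSubtype_apply_of_not_mem _ hm

lemma diskSlide_apply (x y : ball (0 : E) 1) (a : D) :
    diskSlide D e x y a = e.symm (ballSlide x y (e a)) := by
  simp [diskSlide, Equiv.permCongr_apply]

lemma diskSlide_self (x : ball (0 : E) 1) : diskSlide D e x x = Equiv.refl N := by
  rw [diskSlide, ballSlide_self, Equiv.permCongr_refl, ← Equiv.Perm.one_def, map_one,
    Equiv.Perm.one_def]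

lemma diskSlide_symm (x y : ball (0 : E) 1) : (diskSlide D e x y).symm = diskSlide D e y x := by
  rw [diskSlide, diskSlide, ← Equiv.Perm.inv_def, ← map_inv]
  rfl

lemma diskSlide_apply_eq {x y : ball (0 : E) 1} (a b : D) (ha : (e a : E) = x)
    (hb : (e b : E) = y) : diskSlide D e x y a = b := by
  rw [diskSlide_apply, show e a = ⟨x, ball_subset_closedBall x.2⟩ from Subtype.ext ha,
    ballSlide_apply_self, show (⟨y, _⟩ : closedBall (0 : E) 1) = e b from Subtype.ext hb.symm,
    e.symm_apply_apply]

end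

variable [ChartedSpace ℝ² N] {D} (e : D ≃ₜ closedBall (0 : ℝ²) 1)

def toBall {m : N} (hm : m ∈ interior D) : ball (0 : ℝ²) 1 :=
  ⟨e ⟨m, interior_subset hm⟩, (mem_interior_iff_mem_ball e _).1 hm⟩

lemma continuous_toBall {X : Type*} [TopologicalSpace X] {f : X → N} (hf : Continuous f)
    (hfD : ∀ a, f a ∈ interior D) : Continuous fun a => toBall e (hfD a) :=
  (continuous_subtype_val.comp (e.continuous.comp
    (hf.subtype_mk fun a => interior_subset (hfD a)))).subtype_mk _

lemma diskSlide_toBall {m m' : N} (hm : m ∈ interior D) (hm' : m' ∈ interior D) :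
    diskSlide D e (toBall e hm) (toBall e hm') m = m' :=
  diskSlide_apply_eq e ⟨m, interior_subset hm⟩ ⟨m', interior_subset hm'⟩ rfl rfl

variable [T2Space N]

theorem continuous_diskSlide {P : Type*} [TopologicalSpace P] [CompactSpace P] [T2Space P]
    {ξ ζ : P → ball (0 : ℝ²) 1} (hξ : Continuous ξ) (hζ : Continuous ζ) :
    Continuous fun q : P × N => diskSlide D e (ξ q.1) (ζ q.1) q.2 := by
  classical
  have hD : IsClosed D := by
    simpa using (isCompact_range (continuous_subtype_val.comp e.symm.continuous)).isClosed
  unfold diskSlide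
  refine continuous_ofSubtype_of_fixes_frontier
    (σ := fun p => e.symm.toEquiv.permCongr (ballSlide (ξ p) (ζ p))) hD ?_ fun p x hx => ?_
  · convert continuous_subtype_val.comp (e.symm.continuous.comp
      ((continuous_ballSlide hξ hζ).comp (continuous_fst.prodMk
        (e.continuous.comp continuous_snd)))) using 1
    funext q
    simp [Equiv.permCongr_apply]
  · have : 1 ≤ ‖(e x : ℝ²)‖ := by simpa [mem_interior_iff_mem_ball e] using hx
    simp [Equiv.permCongr_apply, ballSlide_of_one_le_norm _ _ this]

lemma continuous_diskSlide_apply (x y : ball (0 : ℝ²) 1) : Continuous (diskSlide D e x y) :=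
  (continuous_diskSlide e (P := Unit) (ξ := fun _ => x) (ζ := fun _ => y) continuous_const
    continuous_const).comp (continuous_const.prodMk continuous_id : Continuous fun m : N => ((), m))

def diskSlideHomeomorph (x y : ball (0 : ℝ²) 1) : N ≃ₜ N where
  toEquiv := diskSlide D e x y
  continuous_toFun := continuous_diskSlide_apply e x y
  continuous_invFun := by
    rw [Equiv.invFun_as_coe, diskSlide_symm]
    exact continuous_diskSlide_apply e y x

@[simp] lemma coe_diskSlideHomeomorph (x y : ball (0 : ℝ²) 1) :
    ⇑(diskSlideHomeomorph e x y) = diskSlide D e x y :=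
  rfl

@[simp] lemma diskSlideHomeomorph_symm (x y : ball (0 : ℝ²) 1) :
    (diskSlideHomeomorph e x y).symm = diskSlideHomeomorph e y x :=
  Homeomorph.ext fun m => DFunLike.congr_fun (diskSlide_symm e x y) m

@[simp] lemma diskSlideHomeomorph_self (x : ball (0 : ℝ²) 1) :
    diskSlideHomeomorph e x x = Homeomorph.refl N :=
  Homeomorph.ext fun m => by simp [diskSlide_self]

end DiskSlide

end

theorem disk_isotopy_carrying_path_general
    {N : Type*} [TopologicalSpace N]
    [T2Space N]
    [ChartedSpace (EuclideanSpace ℝ (Fin 2)) N]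
    (D : Set N)
    (hdisk : Nonempty (↥D ≃ₜ ↥(Metric.closedBall (0 : EuclideanSpace ℝ (Fin 2)) 1)))
    (γ γ' : C(unitInterval, N))
    (hγ : ∀ t, γ t ∈ interior D) (hγ' : ∀ t, γ' t ∈ interior D)
    (h0 : γ 0 = γ' 0) (h1 : γ 1 = γ' 1) :
    ∃ G : unitInterval → N ≃ₜ N,
      -- continuity of the isotopy (loop in Homeo(N))
      Continuous (fun p : unitInterval × N => G p.1 p.2) ∧
      Continuous (fun p : unitInterval × N => (G p.1).symm p.2) ∧
      G 0 = Homeomorph.refl N ∧ G 1 = Homeomorph.refl N ∧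
      -- supported in D
      (∀ t, ∀ m ∉ D, G t m = m) ∧
      -- carries γ to γ'
      (∀ t, G t (γ t) = γ' t) ∧
      -- homotopic rel endpoints to the constant identity isotopy,
      -- through isotopies that are the identity outside D
      (∃ H : unitInterval → unitInterval → N ≃ₜ N,
        Continuous (fun p : (unitInterval × unitInterval) × N => H p.1.1 p.1.2 p.2) ∧
        (∀ t, H 0 t = Homeomorph.refl N) ∧
        (∀ t, H 1 t = G t) ∧
        (∀ s, H s 0 = Homeomorph.refl N) ∧
        (∀ s, H s 1 = Homeomorph.refl N) ∧
        (∀ s t, ∀ m ∉ D, H s t m = m)) := by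
  obtain ⟨e⟩ := hdisk
  let x : unitInterval → ball (0 : ℝ²) 1 := fun t => toBall e (hγ t)
  let y : unitInterval → ball (0 : ℝ²) 1 := fun t => toBall e (hγ' t)
  have hx : Continuous x := continuous_toBall e γ.continuous hγ
  have hy : Continuous y := continuous_toBall e γ'.continuous hγ'
  have hxy0 : x 0 = y 0 := by simp only [x, y, h0]
  have hxy1 : x 1 = y 1 := by simp only [x, y, h1]
  refine ⟨fun t => diskSlideHomeomorph e (x t) (y t), ?_, ?_, ?_, ?_, ?_, ?_,
    fun s t => diskSlideHomeomorph e (x t) (ballSegment (x t) (y t) s), ?_, ?_, ?_, ?_, ?_, ?_⟩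
  · exact continuous_diskSlide e hx hy
  · simpa using continuous_diskSlide e hy hx
  · simp [hxy0]
  · simp [hxy1]
  · exact fun t m hm => diskSlide_apply_of_notMem e _ _ hm
  · exact fun t => diskSlide_toBall e (hγ t) (hγ' t)
  · exact continuous_diskSlide e (ξ := fun q : unitInterval × unitInterval => x q.2)
      (ζ := fun q => ballSegment (x q.2) (y q.2) q.1) (hx.comp continuous_snd)
      ((hx.comp continuous_snd).ballSegment (hy.comp continuous_snd) continuous_fst)
  · simp
  · simp
  · simp [hxy0]
  · simp [hxy1]
  · exact fun s t m hm => diskSlide_apply_of_notMem e _ _ hm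

/-- Given a closed topological disk D_N in a surface N and two paths
γ, γ' in its interior with the same endpoints, there is an isotopy (G_t) from the
identity to itself, supported in D_N, with G_t(γ(t)) = γ'(t), and this isotopy is
homotopic, rel endpoints and relative to the complement of D_N, to the constant
identity isotopy. -/
theorem disk_isotopy_carrying_path
    {N : Type*} [TopologicalSpace N]
    [T2Space N] [SecondCountableTopology N]
    [ChartedSpace (EuclideanSpace ℝ (Fin 2)) N]
    (D : Set N)
    (hdisk : Nonempty (↥D ≃ₜ ↥(Metric.closedBall (0 : EuclideanSpace ℝ (Fin 2)) 1)))
    (γ γ' : C(unitInterval, N))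
    (hγ : ∀ t, γ t ∈ interior D) (hγ' : ∀ t, γ' t ∈ interior D)
    (h0 : γ 0 = γ' 0) (h1 : γ 1 = γ' 1) :
    ∃ G : unitInterval → N ≃ₜ N,
      -- continuity of the isotopy (loop in Homeo(N))
      Continuous (fun p : unitInterval × N => G p.1 p.2) ∧
      Continuous (fun p : unitInterval × N => (G p.1).symm p.2) ∧
      G 0 = Homeomorph.refl N ∧ G 1 = Homeomorph.refl N ∧
      -- supported in D
      (∀ t, ∀ m ∉ D, G t m = m) ∧
      -- carries γ to γ'
      (∀ t, G t (γ t) = γ' t) ∧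
      -- homotopic rel endpoints to the constant identity isotopy,
      -- through isotopies that are the identity outside D
      (∃ H : unitInterval → unitInterval → N ≃ₜ N,
        Continuous (fun p : (unitInterval × unitInterval) × N => H p.1.1 p.1.2 p.2) ∧
        (∀ t, H 0 t = Homeomorph.refl N) ∧
        (∀ t, H 1 t = G t) ∧
        (∀ s, H s 0 = Homeomorph.refl N) ∧
        (∀ s, H s 1 = Homeomorph.refl N) ∧
        (∀ s t, ∀ m ∉ D, H s t m = m)) :=
  disk_isotopy_carrying_path_general D hdisk γ γ' hγ hγ' h0 h1
end

section
/- Define a relation ≼ on the set R of pairs (X, F̂_X), where X ⊂ Fix(F) is closed and F̂_X is a lift of F|_{M\X} to the universal cover of M \ X commuting with deck transformations, by: (X, F̂_X) ≼ (Y, F̂_Y) iff X ⊂ Y ⊂ X ∪ π_X(Fix(F̂_X)) and every path in M \ Y associated to F̂_Y is also associated to F̂_X. Then ≼ is a partial order (reflexive, antisymmetric, transitive) on R. -/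
universe u

/-- A pair (X, F̂_X): a closed set X of fixed points of F together with a lift of
F|_{M\X} to the universal cover of M \ X commuting with deck transformations. -/
structure CommutingLift {M : Type u} [TopologicalSpace M] (F : M ≃ₜ M) where
  /-- the closed set of fixed points -/
  X : Set M
  closedX : IsClosed X
  fixX : ∀ x ∈ X, F x = x
  /-- the universal cover of M \ X -/
  Cover : Type u
  top : TopologicalSpace Cover
  proj : Cover → M
  projMem : ∀ c, proj c ∉ X
  covering : @IsCoveringMap Cover ↥Xᶜ top _ (fun c => ⟨proj c, projMem c⟩)
  simplyConn : @SimplyConnectedSpace Cover top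
  /-- the lift of F|_{M\X}, as a homeomorphism of the cover -/
  Fhat : @Homeomorph Cover Cover top top
  liftF : ∀ c, proj (Fhat c) = F (proj c)
  commutes : ∀ T : @Homeomorph Cover Cover top top,
    (∀ c, proj (T c) = proj c) → ∀ c, Fhat (T c) = T (Fhat c)

variable {M : Type u} [TopologicalSpace M] {F : M ≃ₜ M}

/-- A path α in M \ X is *associated* to the lift (X, F̂_X) if it lifts to a path of
the cover joining a point ĉ to F̂_X(ĉ). -/
def CommutingLift.Assoc (L : CommutingLift F) (α : C(unitInterval, M)) : Prop :=
  ∃ ahat : unitInterval → L.Cover,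
    @Continuous unitInterval L.Cover _ L.top ahat ∧
    (∀ t, L.proj (ahat t) = α t) ∧
    L.Fhat (ahat 0) = ahat 1

/-- The projection π_X(Fix(F̂_X)) of the fixed point set of the lift. -/
def CommutingLift.fixProj (L : CommutingLift F) : Set M :=
  {m | ∃ c, L.proj c = m ∧ L.Fhat c = c}

/-- The relation ≼ on commuting lifts. -/
def CommutingLift.le (L₁ L₂ : CommutingLift F) : Prop :=
  L₁.X ⊆ L₂.X ∧ L₂.X ⊆ L₁.X ∪ L₁.fixProj ∧
    ∀ α : C(unitInterval, M), L₂.Assoc α → L₁.Assoc α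

/-!
Reflexivity and antisymmetry are immediate. For transitivity, the only point is that the
constant path at `m` is associated to a lift exactly when `m ∈ π(Fix F̂)`, since by unique
path lifting a lift of a constant path is constant; so inclusion of associated paths forces
`π_Y(Fix F̂_Y) ⊆ π_X(Fix F̂_X)`.
-/

namespace CommutingLift

theorem assoc_const_iff (L : CommutingLift F) (m : M) :
    L.Assoc (ContinuousMap.const unitInterval m) ↔ m ∈ L.fixProj := by
  let _ : TopologicalSpace L.Cover := L.top
  constructor
  · rintro ⟨ahat, hcont, hproj, hF⟩
    have hconst : ahat = fun _ => ahat 0 :=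
      L.covering.eq_of_comp_eq hcont continuous_const
        (funext fun t => Subtype.ext (by simp [hproj])) 0 rfl
    exact ⟨ahat 0, hproj 0, by rw [hF, hconst]⟩
  · rintro ⟨c, rfl, hfix⟩
    exact ⟨fun _ => c, continuous_const, fun _ => rfl, hfix⟩

theorem fixProj_subset_of_assoc {L₁ L₂ : CommutingLift F}
    (h : ∀ α : C(unitInterval, M), L₂.Assoc α → L₁.Assoc α) :
    L₂.fixProj ⊆ L₁.fixProj := fun m hm =>
  (assoc_const_iff L₁ m).1 (h _ ((assoc_const_iff L₂ m).2 hm))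

theorem le_refl (L : CommutingLift F) : L.le L :=
  ⟨subset_rfl, Set.subset_union_left, fun _ h => h⟩

theorem le_trans {L₁ L₂ L₃ : CommutingLift F} (h₁₂ : L₁.le L₂) (h₂₃ : L₂.le L₃) :
    L₁.le L₃ := by
  obtain ⟨hX₁₂, hfix₁₂, hassoc₁₂⟩ := h₁₂
  obtain ⟨hX₂₃, hfix₂₃, hassoc₂₃⟩ := h₂₃
  refine ⟨hX₁₂.trans hX₂₃, ?_, fun α h => hassoc₁₂ α (hassoc₂₃ α h)⟩
  calc L₃.X ⊆ L₂.X ∪ L₂.fixProj := hfix₂₃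
    _ ⊆ (L₁.X ∪ L₁.fixProj) ∪ L₁.fixProj :=
      Set.union_subset_union hfix₁₂ (fixProj_subset_of_assoc hassoc₁₂)
    _ = L₁.X ∪ L₁.fixProj := by rw [Set.union_assoc, Set.union_self]

theorem le_antisymm {L₁ L₂ : CommutingLift F} (h₁₂ : L₁.le L₂) (h₂₁ : L₂.le L₁) :
    L₁.X = L₂.X ∧ ∀ α : C(unitInterval, M), L₁.Assoc α ↔ L₂.Assoc α :=
  ⟨h₁₂.1.antisymm h₂₁.1, fun α => ⟨h₂₁.2.2 α, h₁₂.2.2 α⟩⟩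

end CommutingLift

theorem commutingLift_le_partialOrder_general
    {M : Type u} [TopologicalSpace M]
    (F : M ≃ₜ M) :
    (∀ L : CommutingLift F, L.le L) ∧
    (∀ L₁ L₂ : CommutingLift F, L₁.le L₂ → L₂.le L₁ →
      L₁.X = L₂.X ∧ ∀ α : C(unitInterval, M), L₁.Assoc α ↔ L₂.Assoc α) ∧
    (∀ L₁ L₂ L₃ : CommutingLift F, L₁.le L₂ → L₂.le L₃ → L₁.le L₃) :=
  ⟨CommutingLift.le_refl, fun _ _ => CommutingLift.le_antisymm,
    fun _ _ _ => CommutingLift.le_trans⟩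

/-- ≼ is a partial order on the set of commuting lifts: it is
reflexive, transitive, and antisymmetric (where, the covers being abstract,
equality of two lifts with the same X is expressed by the equality of their sets
of associated paths, which determines the lift). -/
theorem commutingLift_le_partialOrder
    {M : Type u} [TopologicalSpace M] [T2Space M] [SecondCountableTopology M]
    [ConnectedSpace M] [ChartedSpace (EuclideanSpace ℝ (Fin 2)) M]
    (F : M ≃ₜ M) :
    (∀ L : CommutingLift F, L.le L) ∧
    (∀ L₁ L₂ : CommutingLift F, L₁.le L₂ → L₂.le L₁ →
      L₁.X = L₂.X ∧ ∀ α : C(unitInterval, M), L₁.Assoc α ↔ L₂.Assoc α) ∧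
    (∀ L₁ L₂ L₃ : CommutingLift F, L₁.le L₂ → L₂.le L₃ → L₁.le L₃) :=
  commutingLift_le_partialOrder_general F
end
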